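/- arXiv:2202.07715 — 13 statements merged into one kernel-verified Lean document; each statement's English description precedes it below -/
import Mathlib

section
/- For all positive integers t and u and every natural number n, the number of gridded permutations of size n all of whose cells lie in {0,…,t−1}×{0,…,u−1} equals n! · C(t+n−1, t−1) · C(u+n−1, u−1), where C denotes the binomial coefficient. -/
/-!
Recording, for a permutation `π` of size `n`, the column of each point as a function of its
position and the row of each point as a function of its value, a gridded permutation in
`𝒢^(t,u)` is the same as `π` together with two weakly increasing maps `Fin n → Fin t` and
`Fin n → Fin u`. A weakly increasing map is determined by its multiset of values, so by stars
and bars there are `C(t+n−1, n) = C(t+n−1, t−1)` weakly increasing maps `Fin n → Fin t`.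
-/

/-- A (raw) gridded permutation: a permutation of `Fin n` (recording the size-`n`
underlying permutation) together with a cell in `ℕ × ℕ` for each index. -/
structure GP where
  n : ℕ
  perm : Equiv.Perm (Fin n)
  cells : Fin n → ℕ × ℕ

/-- The consistency condition for a gridded permutation: cells are weakly
increasing in the x-coordinate along positions, and weakly increasing in the
y-coordinate along values. -/
def GP.Consistent (g : GP) : Prop :=
  (∀ i j : Fin g.n, i < j → (g.cells i).1 ≤ (g.cells j).1) ∧
  (∀ i j : Fin g.n, g.perm i < g.perm j → (g.cells i).2 ≤ (g.cells j).2)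

/-- `g.Contains h` means `h ≤ g`: there is a strictly increasing choice of
indices of `g` whose values are order-isomorphic to `h` and whose cells agree
with those of `h`. -/
def GP.Contains (g h : GP) : Prop :=
  ∃ f : Fin h.n → Fin g.n, StrictMono f ∧
    (∀ i j : Fin h.n, (h.perm i < h.perm j ↔ g.perm (f i) < g.perm (f j))) ∧
    ∀ i : Fin h.n, g.cells (f i) = h.cells i

/-- `𝒢^(t,u)`: the set of (consistent) gridded permutations all of whose cells lie in
`{0,…,t−1} × {0,…,u−1}`. -/
def Ggrid (t u : ℕ) : Set GP :=
  {g | g.Consistent ∧ ∀ i : Fin g.n, (g.cells i).1 < t ∧ (g.cells i).2 < u}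

/-- `Grid` of the tiling `((t,u), O, R)`: the gridded permutations in `𝒢^(t,u)` avoiding
every obstruction in `O` and containing at least one element of every requirement
list in `R`. -/
def GridSet (t u : ℕ) (O : Set GP) (R : List (Set GP)) : Set GP :=
  {g | g ∈ Ggrid t u ∧ (∀ o ∈ O, ¬ g.Contains o) ∧ ∀ Ri ∈ R, ∃ x ∈ Ri, g.Contains x}

section Monotone

variable {α : Type*} [LinearOrder α] {n : ℕ}

lemma Sym.length_sort (s : Sym α n) : (s.1.sort (· ≤ ·)).length = n := by
  rw [Multiset.length_sort, s.2]

lemma List.sort_ofFn_of_monotone {f : Fin n → α} (hf : Monotone f) :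
    (List.ofFn f : Multiset α).sort (· ≤ ·) = List.ofFn f :=
  List.Perm.eq_of_sortedLE (Multiset.pairwise_sort _ _).sortedLE hf.sortedLE_ofFn
    (Multiset.coe_eq_coe.mp (Multiset.sort_eq _ _))

variable (α n) in
def monotoneEquivSym :
    {f : Fin n → α // Monotone f} ≃ Sym α n where
  toFun f := ⟨List.ofFn f.1, by simp⟩
  invFun s := ⟨(s.1.sort (· ≤ ·)).get ∘ Fin.cast s.length_sort.symm,
    (Multiset.pairwise_sort _ _).sortedLE.monotone_get.comp (Fin.cast_strictMono _).monotone⟩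
  left_inv f := by
    ext i
    simp only [Function.comp_apply, List.get_eq_getElem, List.sort_ofFn_of_monotone f.2,
      List.getElem_ofFn]
    rfl
  right_inv s := by
    ext1
    show ((List.ofFn ((s.1.sort (· ≤ ·)).get ∘ Fin.cast s.length_sort.symm) : List α) :
      Multiset α) = s.1
    rw [Function.comp_def, ← List.ofFn_congr s.length_sort, List.ofFn_get, Multiset.sort_eq]

lemma card_monotone_fin (t n : ℕ) (ht : 0 < t) :
    Nat.card {f : Fin n → Fin t // Monotone f} = (t + n - 1).choose (t - 1) := by
  obtain ⟨t, rfl⟩ := Nat.exists_eq_add_one.mpr ht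
  rw [Nat.card_congr (monotoneEquivSym _ n), Nat.card_eq_fintype_card, Sym.card_sym_eq_choose,
    Fintype.card_fin, show t + 1 + n - 1 = t + n by omega, Nat.add_sub_cancel, Nat.choose_symm_add]

end Monotone

lemma GP.mk_mem_Ggrid_iff {t u n : ℕ} (π : Equiv.Perm (Fin n)) (c : Fin n → ℕ × ℕ) :
    GP.mk n π c ∈ Ggrid t u ↔
      Monotone (fun i => (c i).1) ∧ Monotone (fun k => (c (π.symm k)).2) ∧
        ∀ i, (c i).1 < t ∧ (c i).2 < u := by
  simp only [Ggrid, GP.Consistent, Set.mem_ofPred_eq, monotone_iff_forall_lt, and_assoc]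
  refine and_congr_right fun _ => and_congr_left fun _ => ?_
  exact ⟨fun h k l hkl => h (π.symm k) (π.symm l) (by simpa using hkl),
    fun h i j hij => by simpa using @h (π i) (π j) hij⟩

def GP.gridCellsEquiv (t u : ℕ) {n : ℕ} (π : Equiv.Perm (Fin n)) :
    {c : Fin n → ℕ × ℕ // GP.mk n π c ∈ Ggrid t u} ≃
      {f : Fin n → Fin t // Monotone f} × {h : Fin n → Fin u // Monotone h} where
  toFun c :=
    have hc := (GP.mk_mem_Ggrid_iff π c.1).mp c.2
    (⟨fun i => ⟨(c.1 i).1, (hc.2.2 i).1⟩, fun _ _ hij => hc.1 hij⟩,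
      ⟨fun k => ⟨(c.1 (π.symm k)).2, (hc.2.2 _).2⟩, fun _ _ hkl => hc.2.1 hkl⟩)
  invFun fh := ⟨fun i => (fh.1.1 i, fh.2.1 (π i)),
    (GP.mk_mem_Ggrid_iff π _).mpr ⟨fun _ _ hij => fh.1.2 hij,
      fun _ _ hkl => by simpa using fh.2.2 hkl, fun i => ⟨(fh.1.1 i).2, (fh.2.1 (π i)).2⟩⟩⟩
  left_inv c := by ext <;> simp
  right_inv fh := by ext <;> simp

def GP.gridEquiv (t u n : ℕ) :
    {g : GP // g ∈ Ggrid t u ∧ g.n = n} ≃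
      Equiv.Perm (Fin n) × {f : Fin n → Fin t // Monotone f} × {h : Fin n → Fin u // Monotone h} where
  toFun
    | ⟨⟨_, π, c⟩, hg, rfl⟩ => (π, GP.gridCellsEquiv t u π ⟨c, hg⟩)
  invFun p := ⟨⟨n, p.1, ((GP.gridCellsEquiv t u p.1).symm p.2).1⟩,
    ((GP.gridCellsEquiv t u p.1).symm p.2).2, rfl⟩
  left_inv := by
    rintro ⟨⟨_, π, c⟩, hg, rfl⟩
    simp
  right_inv := by
    rintro ⟨π, fh⟩
    simp

/-- The number of gridded permutations of size `n` in `𝒢^(t,u)` is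
`n! · C(t+n−1, t−1) · C(u+n−1, u−1)`. -/
theorem count_gridded_permutations (t u n : ℕ) (ht : 0 < t) (hu : 0 < u) :
    Nat.card {g : GP // g ∈ Ggrid t u ∧ g.n = n} =
      n.factorial * (t + n - 1).choose (t - 1) * (u + n - 1).choose (u - 1) := by
  rw [Nat.card_congr (GP.gridEquiv t u n), Nat.card_prod, Nat.card_prod, Nat.card_perm,
    Nat.card_eq_fintype_card, Fintype.card_fin, card_monotone_fin t n ht,
    card_monotone_fin u n hu, mul_assoc]
end

section
/- Fix positive integers t and u and let H be a set of gridded permutations contained in 𝒢^(t,u). Then H is an interval of the containment order on 𝒢^(t,u) (i.e., whenever a, c ∈ H, b ∈ 𝒢^(t,u) and a ≤ b ≤ c, also b ∈ H) if and only if there exists a tiling 𝒯 of dimensions (t,u) with Grid(𝒯) = H. -/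
/-!
Avoiding a set of obstructions is closed downwards and containing an element of a requirement
list is closed upwards, so every `Grid` set is an interval. Conversely, an interval `H` is the
`Grid` set of the tiling with the single requirement list `H` and, as obstructions, the elements
of `𝒢^(t,u)` outside `H` that lie above some element of `H`: the interval property is exactly
what keeps the members of `H` from containing an obstruction.
-/

namespace GP

lemma contains_refl (g : GP) : g.Contains g :=
  ⟨id, strictMono_id, fun _ _ => Iff.rfl, fun _ => rfl⟩

lemma contains_trans {g h k : GP} (hgh : g.Contains h) (hhk : h.Contains k) : g.Contains k := by
  obtain ⟨f, hf, hf_perm, hf_cells⟩ := hgh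
  obtain ⟨e, he, he_perm, he_cells⟩ := hhk
  exact ⟨f ∘ e, hf.comp he, fun i j => (he_perm i j).trans (hf_perm (e i) (e j)),
    fun i => (hf_cells (e i)).trans (he_cells i)⟩

end GP

def IsGridInterval (t u : ℕ) (H : Set GP) : Prop :=
  ∀ a ∈ H, ∀ c ∈ H, ∀ b ∈ Ggrid t u, b.Contains a → c.Contains b → b ∈ H

def intervalObstructions (t u : ℕ) (H : Set GP) : Set GP :=
  {g | g ∈ Ggrid t u ∧ g ∉ H ∧ ∃ a ∈ H, g.Contains a}

lemma isGridInterval_gridSet (t u : ℕ) (O : Set GP) (R : List (Set GP)) :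
    IsGridInterval t u (GridSet t u O R) := by
  rintro a ⟨-, -, ha_req⟩ c ⟨-, hc_avoid, -⟩ b hb hba hcb
  refine ⟨hb, fun o ho hbo => hc_avoid o ho (GP.contains_trans hcb hbo), fun Ri hRi => ?_⟩
  obtain ⟨x, hx, hax⟩ := ha_req Ri hRi
  exact ⟨x, hx, GP.contains_trans hba hax⟩

lemma IsGridInterval.gridSet_eq {t u : ℕ} {H : Set GP} (hH : H ⊆ Ggrid t u)
    (hint : IsGridInterval t u H) : GridSet t u (intervalObstructions t u H) [H] = H := by
  ext g
  simp only [GridSet, List.mem_singleton, forall_eq, Set.mem_ofPred_eq]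
  constructor
  · rintro ⟨hg, hg_avoid, a, ha, hga⟩
    by_contra hgH
    exact hg_avoid g ⟨hg, hgH, a, ha, hga⟩ g.contains_refl
  · intro hgH
    refine ⟨hH hgH, ?_, g, hgH, g.contains_refl⟩
    rintro o ⟨ho, hoH, a, ha, hoa⟩ hgo
    exact hoH (hint a ha g hgH o ho hoa hgo)

theorem interval_iff_tiling_general (t u : ℕ)
    (H : Set GP) (hH : H ⊆ Ggrid t u) :
    (∀ a ∈ H, ∀ c ∈ H, ∀ b ∈ Ggrid t u, b.Contains a → c.Contains b → b ∈ H) ↔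
      ∃ (O : Set GP) (R : List (Set GP)),
        O ⊆ Ggrid t u ∧ (∀ Ri ∈ R, Ri ⊆ Ggrid t u) ∧ GridSet t u O R = H := by
  constructor
  · intro hint
    refine ⟨intervalObstructions t u H, [H], fun g hg => hg.1, ?_,
      IsGridInterval.gridSet_eq hH hint⟩
    simpa only [List.mem_singleton, forall_eq] using hH
  · rintro ⟨O, R, -, -, rfl⟩
    exact isGridInterval_gridSet t u O R

/-- A subset `H` of `𝒢^(t,u)` is an interval of the containment order if and only if
there is a tiling `((t,u), O, R)` with `Grid = H`. -/
theorem interval_iff_tiling (t u : ℕ) (ht : 0 < t) (hu : 0 < u)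
    (H : Set GP) (hH : H ⊆ Ggrid t u) :
    (∀ a ∈ H, ∀ c ∈ H, ∀ b ∈ Ggrid t u, b.Contains a → c.Contains b → b ∈ H) ↔
      ∃ (O : Set GP) (R : List (Set GP)),
        O ⊆ Ggrid t u ∧ (∀ Ri ∈ R, Ri ⊆ Ggrid t u) ∧ GridSet t u O R = H :=
  interval_iff_tiling_general t u H hH
end

section
/- Let 𝒯 = ((t,u), 𝒪, {ℛ_1, …, ℛ_k}) be a tiling in which every requirement list ℛ_i is finite and nonempty, let ℓ_i be the maximum size of a gridded permutation in ℛ_i, and let L = ℓ_1 + ⋯ + ℓ_k. If Grid(𝒯) is nonempty, then Grid(𝒯) contains a gridded permutation whose size is at most L. -/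
/-!
Take any `g ∈ Grid(𝒯)` and fix, for each requirement list `ℛᵢ`, an occurrence in `g` of some
element of `ℛᵢ`; it uses at most `ℓᵢ` points of `g`. Keeping only the at most `L` points of `g`
used by these occurrences gives a gridded permutation contained in `g`. Containment is
transitive and the grid conditions pass to subpatterns, so it still lies in `𝒢^(t,u)` and avoids
every obstruction, and it still contains an element of every requirement list.
-/

namespace GP

/-- `f` is an occurrence of the pattern `h` in `g`; `g.Contains h` says that one exists. -/
def IsOccurrence (h g : GP) (f : Fin h.n → Fin g.n) : Prop :=
  StrictMono f ∧ (∀ i j, h.perm i < h.perm j ↔ g.perm (f i) < g.perm (f j)) ∧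
    ∀ i, g.cells (f i) = h.cells i

variable {g h x : GP}

theorem IsOccurrence.comp {e : Fin h.n → Fin g.n} {k : Fin x.n → Fin h.n}
    (he : IsOccurrence h g e) (hk : IsOccurrence x h k) : IsOccurrence x g (e ∘ k) :=
  ⟨he.1.comp hk.1, fun i j => (hk.2.1 i j).trans (he.2.1 (k i) (k j)),
    fun i => (he.2.2 (k i)).trans (hk.2.2 i)⟩

theorem IsOccurrence.of_comp {e : Fin h.n → Fin g.n} {k : Fin x.n → Fin h.n}
    (he : IsOccurrence h g e) (hek : IsOccurrence x g (e ∘ k)) : IsOccurrence x h k :=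
  ⟨fun _ _ hab => he.1.lt_iff_lt.mp (hek.1 hab),
    fun i j => (hek.2.1 i j).trans (he.2.1 (k i) (k j)).symm,
    fun i => (he.2.2 (k i)).symm.trans (hek.2.2 i)⟩

theorem Contains.trans (hgh : g.Contains h) (hhx : h.Contains x) : g.Contains x :=
  let ⟨e, he⟩ := hgh
  let ⟨k, hk⟩ := hhx
  ⟨e ∘ k, IsOccurrence.comp he hk⟩

theorem mem_Ggrid_of_contains {t u : ℕ} (hg : g ∈ Ggrid t u) (hgh : g.Contains h) :
    h ∈ Ggrid t u := by
  obtain ⟨⟨hx, hy⟩, hbound⟩ := hg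
  obtain ⟨f, hf, hperm, hcells⟩ := hgh
  refine ⟨⟨fun i j hij => ?_, fun i j hij => ?_⟩, fun i => ?_⟩
  · simpa only [hcells] using hx _ _ (hf hij)
  · simpa only [hcells] using hy _ _ ((hperm i j).mp hij)
  · simpa only [hcells] using hbound (f i)

/-- The points of `g` at the positions in `S`, with their values re-ranked to form a
permutation of `Fin S.card`. -/
def restrict (g : GP) (S : Finset (Fin g.n)) : GP where
  n := S.card
  perm := (S.orderIsoOfFin rfl).toEquiv.trans
    ((g.perm.subtypeEquiv fun _ => (Finset.mem_map' g.perm.toEmbedding).symm).trans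
      ((S.map g.perm.toEmbedding).orderIsoOfFin (Finset.card_map _)).symm.toEquiv)
  cells i := g.cells (S.orderEmbOfFin rfl i)

theorem isOccurrence_restrict (g : GP) (S : Finset (Fin g.n)) :
    IsOccurrence (g.restrict S) g (S.orderEmbOfFin rfl) := by
  have hperm : ∀ i, (g.restrict S).perm i =
      ((S.map g.perm.toEmbedding).orderIsoOfFin (Finset.card_map _)).symm
        ⟨g.perm (S.orderEmbOfFin rfl i), Finset.mem_map_of_mem _ (S.orderEmbOfFin_mem rfl i)⟩ :=
    fun _ => rfl
  refine ⟨(S.orderEmbOfFin rfl).strictMono, fun i j => ?_, fun _ => rfl⟩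
  rw [hperm, hperm]
  exact (OrderIso.lt_iff_lt _).trans Subtype.mk_lt_mk

theorem contains_restrict (g : GP) (S : Finset (Fin g.n)) : g.Contains (g.restrict S) :=
  ⟨_, isOccurrence_restrict g S⟩

theorem IsOccurrence.restrict {f : Fin x.n → Fin g.n} (hf : IsOccurrence x g f)
    {S : Finset (Fin g.n)} (hfS : ∀ i, f i ∈ S) : (g.restrict S).Contains x := by
  let k i := (S.orderIsoOfFin rfl).symm ⟨f i, hfS i⟩
  have hk : (S.orderEmbOfFin rfl) ∘ k = f := by
    funext i
    simp [k, ← Finset.coe_orderIsoOfFin_apply]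
  exact ⟨k, (isOccurrence_restrict g S).of_comp (hk ▸ hf)⟩

theorem exists_finset_card_le_of_forall_contains (g : GP) {R : List (Set GP)}
    (hfin : ∀ Ri ∈ R, Ri.Finite) (hR : ∀ Ri ∈ R, ∃ x ∈ Ri, g.Contains x) :
    ∃ S : Finset (Fin g.n), S.card ≤ (R.map fun Ri => sSup (GP.n '' Ri)).sum ∧
      ∀ Ri ∈ R, ∃ x ∈ Ri, ∃ f, IsOccurrence x g f ∧ ∀ i, f i ∈ S := by
  classical
  induction R with
  | nil => exact ⟨∅, by simp, by simp⟩
  | cons Ri R ih =>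
    rw [List.forall_mem_cons] at hfin hR
    obtain ⟨S, hScard, hSR⟩ := ih hfin.2 hR.2
    obtain ⟨x, hx, f, hf⟩ := hR.1
    have hxn : x.n ≤ sSup (GP.n '' Ri) :=
      le_csSup (hfin.1.image GP.n).bddAbove (Set.mem_image_of_mem _ hx)
    refine ⟨Finset.univ.image f ∪ S, ?_, List.forall_mem_cons.mpr ⟨?_, fun Rj hRj => ?_⟩⟩
    · calc (Finset.univ.image f ∪ S).card ≤ (Finset.univ.image f).card + S.card :=
            Finset.card_union_le _ _
        _ ≤ x.n + S.card := by
            gcongr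
            exact Finset.card_image_le.trans_eq (Finset.card_fin _)
        _ ≤ _ := by rw [List.map_cons, List.sum_cons]; omega
    · exact ⟨x, hx, f, hf, fun i => Finset.mem_union_left _ (Finset.mem_image_of_mem f
        (Finset.mem_univ i))⟩
    · obtain ⟨y, hy, f', hf', hf'S⟩ := hSR Rj hRj
      exact ⟨y, hy, f', hf', fun i => Finset.mem_union_right _ (hf'S i)⟩

end GP

theorem grid_nonempty_has_small_element_general (t u : ℕ) (O : Set GP) (R : List (Set GP))
    (hfin : ∀ Ri ∈ R, Ri.Finite)
    (hGrid : (GridSet t u O R).Nonempty) :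
    ∃ g ∈ GridSet t u O R, g.n ≤ (R.map fun Ri => sSup (GP.n '' Ri)).sum := by
  obtain ⟨g, hgrid, hobs, hreq⟩ := hGrid
  obtain ⟨S, hScard, hSR⟩ := g.exists_finset_card_le_of_forall_contains hfin hreq
  have hsub : g.Contains (g.restrict S) := g.contains_restrict S
  refine ⟨g.restrict S, ⟨GP.mem_Ggrid_of_contains hgrid hsub,
    fun o ho hcon => hobs o ho (hsub.trans hcon), fun Ri hRi => ?_⟩, hScard⟩
  obtain ⟨x, hx, f, hf, hfS⟩ := hSR Ri hRi
  exact ⟨x, hx, hf.restrict hfS⟩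

/-- If every requirement list of a tiling is finite and nonempty and `Grid(𝒯)` is
nonempty, then `Grid(𝒯)` contains a gridded permutation of size at most
`L = ℓ₁ + ⋯ + ℓ_k`, where `ℓᵢ` is the largest size of a gridded permutation in the
`i`-th requirement list. -/
theorem grid_nonempty_has_small_element (t u : ℕ) (O : Set GP) (R : List (Set GP))
    (hfin : ∀ Ri ∈ R, Ri.Finite) (hne : ∀ Ri ∈ R, Ri.Nonempty)
    (hGrid : (GridSet t u O R).Nonempty) :
    ∃ g ∈ GridSet t u O R, g.n ≤ (R.map fun Ri => sSup (GP.n '' Ri)).sum :=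
  grid_nonempty_has_small_element_general t u O R hfin hGrid
end

section
/- Let U be a finite set of combinatorial rules over a type Σ of symbols. A rule R ∈ U belongs to some combinatorial specification S with S ⊆ U if and only if R belongs to some closed subset T ⊆ U. Consequently, the union of all combinatorial specifications contained in U equals the union of all closed subsets of U (which is the largest closed subset of U, the output of the Combinatorial Specification Searcher algorithm). -/
/-!
A specification is closed. Conversely, from a closed set `T` containing `R` keep exactly one
rule for each left-hand side occurring in `T`, choosing `R` for its own. Every right-hand-side
symbol of a kept rule is a left-hand side in `T` by closedness, so it has exactly one kept rule.
-/

/-- A combinatorial rule over a type `α` of symbols: a left-hand side together with a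
list of right-hand-side symbols. -/
abbrev CombRule (α : Type*) := α × List α

/-- A set of rules is a combinatorial specification if for every rule in the set and
every symbol on its right-hand side there is exactly one rule in the set with that
symbol as its left-hand side. -/
def IsSpecification {α : Type*} (S : Set (CombRule α)) : Prop :=
  ∀ r ∈ S, ∀ b ∈ r.2, ∃! r' : CombRule α, r' ∈ S ∧ r'.1 = b

/-- A set of rules is closed if for every rule in the set and every symbol on its
right-hand side there is at least one rule in the set with that symbol as its
left-hand side. -/
def IsClosedRuleSet {α : Type*} (S : Set (CombRule α)) : Prop :=
  ∀ r ∈ S, ∀ b ∈ r.2, ∃ r' ∈ S, r'.1 = b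

theorem IsClosedRuleSet.isSpecification_of_bijOn {α : Type*} {S T : Set (CombRule α)}
    (hT : IsClosedRuleSet T) (hST : S ⊆ T) (hS : Set.BijOn Prod.fst S (Prod.fst '' T)) :
    IsSpecification S := by
  intro r hr b hb
  obtain ⟨r', hr'T, rfl⟩ := hT r (hST hr) b hb
  obtain ⟨s, hsS, hs⟩ := hS.surjOn ⟨r', hr'T, rfl⟩
  exact ⟨s, ⟨hsS, hs⟩, fun t ht => hS.injOn ht.1 hsS (ht.2.trans hs.symm)⟩

theorem IsClosedRuleSet.exists_isSpecification {α : Type*} {T : Set (CombRule α)}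
    (hT : IsClosedRuleSet T) {R : CombRule α} (hR : R ∈ T) :
    ∃ S ⊆ T, IsSpecification S ∧ R ∈ S := by
  obtain ⟨S, hRS, hST, hS⟩ :=
    (Set.bijOn_singleton.mpr rfl : Set.BijOn Prod.fst {R} {R.1}).exists_extend_of_subset
      (Set.singleton_subset_iff.mpr hR)
      (Set.singleton_subset_iff.mpr (Set.mem_image_of_mem Prod.fst hR))
      (Set.surjOn_image _ _)
  exact ⟨S, hST, hT.isSpecification_of_bijOn hST hS, hRS rfl⟩

theorem IsSpecification.isClosedRuleSet {α : Type*} {S : Set (CombRule α)}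
    (hS : IsSpecification S) : IsClosedRuleSet S :=
  fun r hr b hb => (hS r hr b hb).exists

theorem exists_isSpecification_iff_exists_isClosedRuleSet {α : Type*} (U : Set (CombRule α))
    (R : CombRule α) :
    (∃ S, S ⊆ U ∧ IsSpecification S ∧ R ∈ S) ↔ ∃ T, T ⊆ U ∧ IsClosedRuleSet T ∧ R ∈ T := by
  constructor
  · rintro ⟨S, hSU, hS, hRS⟩
    exact ⟨S, hSU, hS.isClosedRuleSet, hRS⟩
  · rintro ⟨T, hTU, hT, hRT⟩
    obtain ⟨S, hST, hS, hRS⟩ := hT.exists_isSpecification hRT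
    exact ⟨S, hST.trans hTU, hS, hRS⟩

theorem mem_spec_iff_mem_closed_general {α : Type*} (U : Set (CombRule α)) :
    (∀ R ∈ U,
      ((∃ S, S ⊆ U ∧ IsSpecification S ∧ R ∈ S) ↔
        ∃ T, T ⊆ U ∧ IsClosedRuleSet T ∧ R ∈ T)) ∧
    ⋃₀ {S | S ⊆ U ∧ IsSpecification S} = ⋃₀ {T | T ⊆ U ∧ IsClosedRuleSet T} := by
  refine ⟨fun R _ => exists_isSpecification_iff_exists_isClosedRuleSet U R, ?_⟩
  ext R
  simpa only [Set.mem_sUnion, Set.mem_ofPred_eq, and_assoc]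
    using exists_isSpecification_iff_exists_isClosedRuleSet U R

/-- For a finite set `U` of combinatorial rules, a rule of `U` belongs to some
combinatorial specification contained in `U` if and only if it belongs to some closed
subset of `U`; consequently the union of all specifications contained in `U` equals the
union of all closed subsets of `U`. -/
theorem mem_spec_iff_mem_closed {α : Type*} (U : Set (CombRule α)) (hU : U.Finite) :
    (∀ R ∈ U,
      ((∃ S, S ⊆ U ∧ IsSpecification S ∧ R ∈ S) ↔
        ∃ T, T ⊆ U ∧ IsClosedRuleSet T ∧ R ∈ T)) ∧
    ⋃₀ {S | S ⊆ U ∧ IsSpecification S} = ⋃₀ {T | T ⊆ U ∧ IsClosedRuleSet T} :=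
  mem_spec_iff_mem_closed_general U
end

section
/- Let V be a type and E : V → Finset V, and suppose there is no infinite directed walk, i.e., there is no function f : ℕ → V with f(n+1) ∈ E(f(n)) for all n ∈ ℕ. Let F : V → ((V → ℂ) → ℂ) be local to E. Then there exists exactly one function x : V → ℂ such that x(v) = F v x for every v ∈ V. -/
/-!
Having no infinite directed walk says exactly that the relation "`w` is an out-neighbour of `v`"
is well-founded. Locality lets the value at `v` be computed from the values at the out-neighbours
alone, so a solution is built by well-founded recursion, and any two solutions agree by
well-founded induction.
-/

def IsLocalTo {V β : Type*} (r : V → V → Prop) (F : V → (V → β) → β) : Prop :=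
  ∀ (v : V) (x y : V → β), (∀ w, r w v → x w = y w) → F v x = F v y

namespace WellFounded

variable {V β : Type*} {r : V → V → Prop} {F : V → (V → β) → β}

theorem exists_forall_eq_apply_of_isLocalTo [Nonempty β] (hr : WellFounded r)
    (hF : IsLocalTo r F) : ∃ x : V → β, ∀ v, x v = F v x := by
  classical
  let x : V → β := hr.fix fun v ih =>
    F v fun w => if h : r w v then ih w h else Classical.arbitrary β
  exact ⟨x, fun v => (hr.fix_eq _ v).trans <| hF v _ _ fun w hw => dif_pos hw⟩

theorem eq_of_forall_eq_apply_of_isLocalTo (hr : WellFounded r) (hF : IsLocalTo r F)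
    {x y : V → β} (hx : ∀ v, x v = F v x) (hy : ∀ v, y v = F v y) : x = y :=
  funext fun v => hr.induction v fun v ih => (hx v).trans <| (hF v x y ih).trans (hy v).symm

end WellFounded

/-- If a reliance graph `E : V → Finset V` has no infinite directed walks, then any
family of counting equations `F` that is local to `E` (each equation depends only on
the values at the out-neighbours) has a unique solution. -/
theorem unique_solution_of_no_infinite_walk {V : Type*} (E : V → Finset V)
    (hwalk : ¬ ∃ f : ℕ → V, ∀ n : ℕ, f (n + 1) ∈ E (f n))
    (F : V → (V → ℂ) → ℂ)
    (hlocal : ∀ (v : V) (x y : V → ℂ), (∀ w ∈ E v, x w = y w) → F v x = F v y) :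
    ∃! x : V → ℂ, ∀ v : V, x v = F v x := by
  have hwf : WellFounded fun w v => w ∈ E v :=
    wellFounded_iff_isEmpty_descending_chain.mpr ⟨fun ⟨f, hf⟩ => hwalk ⟨f, hf⟩⟩
  obtain ⟨x, hx⟩ := hwf.exists_forall_eq_apply_of_isLocalTo hlocal
  exact ⟨x, hx, fun y hy => hwf.eq_of_forall_eq_apply_of_isLocalTo hlocal hy hx⟩
end

section
/- Let S be a finite type, a : S → ℕ → ℕ, and R a binary relation on S × ℕ such that for all (v,N) and (w,j) with (v,N) R (w,j): (1) j ≤ N, and (2) if j = N then a(w)(n) ≤ a(v)(n) for all n ∈ ℕ and a(w)(ℓ) < a(v)(ℓ) for some ℓ ∈ ℕ. Then R admits no infinite directed walk: there is no function f : ℕ → S × ℕ with f(i) R f(i+1) for all i ∈ ℕ. -/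
/-!
Every reliance step strictly decreases the pair (size, counting sequence) in the lexicographic
order, where counting sequences are compared pointwise. The pointwise order is not well-founded
on `ℕ → ℕ`, but only the finitely many sequences `a v` occur, and any strict order on a finite
set is well-founded; hence so is the lexicographic order, and there is no infinite walk.
-/

open Function in
theorem Finite.wellFounded_lt_onFun {S β : Type*} [Finite S] [Preorder β] (g : S → β) :
    WellFounded ((· < ·) on g) :=
  haveI : IsTrans S ((· < ·) on g) := ⟨fun _ _ _ => lt_trans⟩
  haveI : Std.Irrefl ((· < ·) on g) := ⟨fun _ => lt_irrefl _⟩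
  Finite.wellFounded_of_trans_of_irrefl _

theorem wellFounded_flip_of_productive {S : Type*} [Finite S] (a : S → ℕ → ℕ)
    (R : S × ℕ → S × ℕ → Prop)
    (h1 : ∀ p q : S × ℕ, R p q → q.2 ≤ p.2)
    (h2 : ∀ p q : S × ℕ, R p q → q.2 = p.2 →
      (∀ n : ℕ, a q.1 n ≤ a p.1 n) ∧ ∃ ℓ : ℕ, a q.1 ℓ < a p.1 ℓ) :
    WellFounded (flip R) := by
  refine Subrelation.wf ?_
    ((wellFounded_lt.prod_lex (Finite.wellFounded_lt_onFun a)).onFun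
      (f := fun p : S × ℕ => (p.2, p.1)))
  intro q p hpq
  rcases (h1 p q hpq).lt_or_eq with hlt | heq
  · exact Prod.Lex.left _ _ hlt
  · exact Prod.lex_def.mpr (Or.inr ⟨heq, Pi.lt_def.mpr (h2 p q hpq heq)⟩)

/-- The reliance graph of a specification composed of productive strategies has no
infinite directed walks: if every reliance `(v,N) R (w,j)` satisfies `j ≤ N`, and
moreover whenever `j = N` the counting sequence of `w` is dominated by that of `v`
and strictly smaller at some size, then there is no infinite directed walk. -/
theorem no_infinite_walk_of_productive {S : Type*} [Finite S] (a : S → ℕ → ℕ)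
    (R : S × ℕ → S × ℕ → Prop)
    (h1 : ∀ p q : S × ℕ, R p q → q.2 ≤ p.2)
    (h2 : ∀ p q : S × ℕ, R p q → q.2 = p.2 →
      (∀ n : ℕ, a q.1 n ≤ a p.1 n) ∧ ∃ ℓ : ℕ, a q.1 ℓ < a p.1 ℓ) :
    ¬ ∃ f : ℕ → S × ℕ, ∀ i : ℕ, R (f i) (f (i + 1)) := by
  rintro ⟨f, hf⟩
  exact (wellFounded_iff_isEmpty_descending_chain.1
    (wellFounded_flip_of_productive a R h1 h2)).elim ⟨f, hf⟩
end

section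
/- Let S be a finite type, a : S → ℕ → ℕ, and E : S × ℕ → Finset (S × ℕ) such that for all (v,N) and all (w,j) ∈ E(v,N): (1) j ≤ N, and (2) if j = N then a(w)(n) ≤ a(v)(n) for all n ∈ ℕ and a(w)(ℓ) < a(v)(ℓ) for some ℓ ∈ ℕ. Let F : S × ℕ → (((S × ℕ) → ℂ) → ℂ) be local to E, i.e., F p x = F p y whenever x and y agree on every element of E(p). Then there exists exactly one function x : S × ℕ → ℂ with x(p) = F p x for every p ∈ S × ℕ. -/
/-!
Order the vertices `(v, N)` lexicographically: first by size `N`, then by the strict pointwise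
order of the counting sequences `a v`. Since `S` is finite, this order is well-founded, and
conditions (1) and (2) say exactly that every out-neighbour of a vertex lies strictly below it.
The counting equations then define the solution by well-founded recursion, and any two
solutions agree by well-founded induction.
-/

namespace WellFounded

variable {α β : Type*} {r : α → α → Prop} {F : α → (α → β) → β}

theorem eq_of_forall_eq_apply_of_local (hr : WellFounded r)
    (hF : ∀ p x y, (∀ q, r q p → x q = y q) → F p x = F p y)
    {x y : α → β} (hx : ∀ p, x p = F p x) (hy : ∀ p, y p = F p y) : x = y := by
  funext p
  induction p using hr.induction with
  | _ p ih => rw [hx p, hy p]; exact hF p x y ih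

theorem exists_forall_eq_apply_of_local [Nonempty β] (hr : WellFounded r)
    (hF : ∀ p x y, (∀ q, r q p → x q = y q) → F p x = F p y) :
    ∃ x : α → β, ∀ p, x p = F p x := by
  classical
  -- Values off the predecessors of `p` are irrelevant to `F p`, so any filler will do.
  let x : α → β := hr.fix fun p ih =>
    F p fun q => if h : r q p then ih q h else Classical.arbitrary β
  refine ⟨x, fun p => ?_⟩
  rw [show x p = _ from hr.fix_eq _ p]
  exact hF p _ x fun q hq => dif_pos hq

theorem existsUnique_forall_eq_apply_of_local [Nonempty β] (hr : WellFounded r)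
    (hF : ∀ p x y, (∀ q, r q p → x q = y q) → F p x = F p y) :
    ∃! x : α → β, ∀ p, x p = F p x :=
  let ⟨x, hx⟩ := hr.exists_forall_eq_apply_of_local hF
  ⟨x, hx, fun _ hy => hr.eq_of_forall_eq_apply_of_local hF hy hx⟩

end WellFounded

/-- `(w, j)` lies below `(v, N)` when `j < N`, or `j = N` and `a w < a v` pointwise-strictly. -/
def sizeThenSequenceLex {S : Type*} (a : S → ℕ → ℕ) : S × ℕ → S × ℕ → Prop :=
  InvImage (Prod.Lex (· < ·) (InvImage (· < ·) a)) Prod.swap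

theorem wellFounded_sizeThenSequenceLex {S : Type*} [Finite S] (a : S → ℕ → ℕ) :
    WellFounded (sizeThenSequenceLex a) :=
  InvImage.wf _ (wellFounded_lt.prod_lex (Finite.wellFounded_of_trans_of_irrefl _))

/-- A specification composed of rules derived from productive strategies is
productive: if the reliance graph `E` on `S × ℕ` satisfies the productivity
conditions with respect to the counting sequences `a`, then any family of counting
equations `F` local to `E` has a unique solution. -/
theorem productive_unique_solution {S : Type*} [Finite S] (a : S → ℕ → ℕ)
    (E : S × ℕ → Finset (S × ℕ))
    (h1 : ∀ p q : S × ℕ, q ∈ E p → q.2 ≤ p.2)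
    (h2 : ∀ p q : S × ℕ, q ∈ E p → q.2 = p.2 →
      (∀ n : ℕ, a q.1 n ≤ a p.1 n) ∧ ∃ ℓ : ℕ, a q.1 ℓ < a p.1 ℓ)
    (F : S × ℕ → ((S × ℕ) → ℂ) → ℂ)
    (hlocal : ∀ (p : S × ℕ) (x y : (S × ℕ) → ℂ), (∀ q ∈ E p, x q = y q) → F p x = F p y) :
    ∃! x : (S × ℕ) → ℂ, ∀ p : S × ℕ, x p = F p x := by
  have hE : ∀ p, ∀ q ∈ E p, sizeThenSequenceLex a q p := by
    intro p q hq
    rcases (h1 p q hq).lt_or_eq with hlt | heq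
    · exact Prod.Lex.left _ _ hlt
    · exact Prod.lex_def.2 (Or.inr ⟨heq, Pi.lt_def.2 (h2 p q hq heq)⟩)
  exact (wellFounded_sizeThenSequenceLex a).existsUnique_forall_eq_apply_of_local
    fun p x y hxy => hlocal p x y fun q hq => hxy q (hE p q hq)
end

section
/- Let 𝒯 = ((t,u), 𝒪, ℛ) be a tiling and H a set of gridded permutations in 𝒢^(t,u). Let 𝒯_O = ((t,u), 𝒪 ∪ H, ℛ) and 𝒯_R = ((t,u), 𝒪, ℛ ∪ {H}), and suppose Grid(𝒯_O) and Grid(𝒯_R) are both nonempty. Then Grid(𝒯) is the disjoint union of Grid(𝒯_O) and Grid(𝒯_R); consequently, writing |X_n| for the number of size-n elements of a set X of gridded permutations, |Grid(𝒯)_n| ≥ |Grid(𝒯_O)_n| for all n with strict inequality for at least one n, and |Grid(𝒯)_n| ≥ |Grid(𝒯_R)_n| for all n with strict inequality for at least one n. (In particular the Requirement Insertion strategy is productive.) -/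
/-- The number of gridded permutations of size `m` in a set `X`. -/
noncomputable def sizeCount (X : Set GP) (m : ℕ) : ℕ :=
  Nat.card {g : GP // g ∈ X ∧ g.n = m}

/-!
A gridded permutation of `Grid(𝒯)` either avoids every element of `H` or contains one of
them, and not both, so `Grid(𝒯)` is the disjoint union of `Grid(𝒯_O)` and `Grid(𝒯_R)`.
As `𝒢^(t,u)` has only finitely many elements of each size, counts are monotone under
inclusion, and any element of the other (nonempty) part makes the count drop strictly at
its size.
-/

lemma finite_Ggrid_size (t u m : ℕ) : {g : GP | g ∈ Ggrid t u ∧ g.n = m}.Finite := by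
  have hcells : (Set.univ.pi fun _ : Fin m => Set.Iio t ×ˢ Set.Iio u).Finite :=
    Set.Finite.pi fun _ => (Set.finite_Iio t).prod (Set.finite_Iio u)
  refine ((Set.finite_univ.prod hcells).image
    fun pc : Equiv.Perm (Fin m) × (Fin m → ℕ × ℕ) => (⟨m, pc.1, pc.2⟩ : GP)).subset ?_
  rintro ⟨n, p, c⟩ ⟨⟨-, hc⟩, rfl⟩
  exact ⟨(p, c), ⟨trivial, fun i _ => hc i⟩, rfl⟩

lemma sizeCount_eq_ncard (X : Set GP) (m : ℕ) :
    sizeCount X m = {g : GP | g ∈ X ∧ g.n = m}.ncard :=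
  (Nat.card_coe_set_eq _).symm

section SizeCount

variable {t u : ℕ} {X Y : Set GP}

lemma sizeCount_mono (hXY : X ⊆ Y) (hY : Y ⊆ Ggrid t u) (m : ℕ) :
    sizeCount X m ≤ sizeCount Y m := by
  rw [sizeCount_eq_ncard, sizeCount_eq_ncard]
  exact Set.ncard_le_ncard (fun g hg => ⟨hXY hg.1, hg.2⟩)
    ((finite_Ggrid_size t u m).subset fun g hg => ⟨hY hg.1, hg.2⟩)

lemma sizeCount_lt_of_mem_diff (hXY : X ⊆ Y) (hY : Y ⊆ Ggrid t u) {w : GP} (hwY : w ∈ Y)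
    (hwX : w ∉ X) : sizeCount X w.n < sizeCount Y w.n := by
  rw [sizeCount_eq_ncard, sizeCount_eq_ncard]
  refine Set.ncard_lt_ncard ⟨fun g hg => ⟨hXY hg.1, hg.2⟩, fun h => hwX (h ⟨hwY, rfl⟩).1⟩
    ((finite_Ggrid_size t u w.n).subset fun g hg => ⟨hY hg.1, hg.2⟩)

lemma sizeCount_lt_of_disjoint_union {A B : Set GP} (hY : Y ⊆ Ggrid t u) (hAB : Y = A ∪ B)
    (hdisj : Disjoint A B) (hB : B.Nonempty) :
    (∀ m, sizeCount A m ≤ sizeCount Y m) ∧ ∃ m, sizeCount A m < sizeCount Y m := by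
  have hAY : A ⊆ Y := hAB ▸ Set.subset_union_left
  obtain ⟨w, hw⟩ := hB
  exact ⟨sizeCount_mono hAY hY, w.n, sizeCount_lt_of_mem_diff hAY hY
    (hAB ▸ Set.mem_union_right A hw) (Set.disjoint_right.mp hdisj hw)⟩

end SizeCount

section GridSet

variable {t u : ℕ} {O : Set GP} {R : List (Set GP)}

lemma GridSet_subset_Ggrid : GridSet t u O R ⊆ Ggrid t u := fun _ hg => hg.1

lemma GridSet_anti_obstructions {O' : Set GP} (hO : O ⊆ O') :
    GridSet t u O' R ⊆ GridSet t u O R :=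
  fun _ ⟨hg, hAvoid, hReq⟩ => ⟨hg, fun o ho => hAvoid o (hO ho), hReq⟩

lemma GridSet_anti_requirements {R' : List (Set GP)} (hR : R ⊆ R') :
    GridSet t u O R' ⊆ GridSet t u O R :=
  fun _ ⟨hg, hAvoid, hReq⟩ => ⟨hg, hAvoid, fun Ri hRi => hReq Ri (hR hRi)⟩

lemma GridSet_eq_union_insert (H : Set GP) :
    GridSet t u O R = GridSet t u (O ∪ H) R ∪ GridSet t u O (H :: R) := by
  refine subset_antisymm ?_ (Set.union_subset (GridSet_anti_obstructions Set.subset_union_left)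
    (GridSet_anti_requirements (List.subset_cons_self H R)))
  rintro g ⟨hg, hAvoid, hReq⟩
  by_cases hH : ∃ x ∈ H, g.Contains x
  · exact Or.inr ⟨hg, hAvoid, List.forall_mem_cons.2 ⟨hH, hReq⟩⟩
  · refine Or.inl ⟨hg, ?_, hReq⟩
    rintro o (ho | ho) hgo
    exacts [hAvoid o ho hgo, hH ⟨o, ho, hgo⟩]

lemma disjoint_GridSet_insert (H : Set GP) :
    Disjoint (GridSet t u (O ∪ H) R) (GridSet t u O (H :: R)) := by
  rw [Set.disjoint_left]
  rintro g ⟨-, hAvoid, -⟩ ⟨-, -, hReq⟩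
  obtain ⟨x, hx, hgx⟩ := hReq H List.mem_cons_self
  exact hAvoid x (Or.inr hx) hgx

end GridSet

/-- Requirement Insertion: inserting a set `H` of gridded permutations splits
`Grid(𝒯)` into the disjoint union of `Grid(𝒯_O)` (avoiding `H`) and `Grid(𝒯_R)`
(containing `H`), and when both parts are nonempty the counting sequence of each
part is dominated by that of `Grid(𝒯)` with strict inequality at some size
(so the Requirement Insertion strategy is productive). -/
theorem requirement_insertion_productive (t u : ℕ) (O : Set GP) (R : List (Set GP))
    (H : Set GP)
    (hO : (GridSet t u (O ∪ H) R).Nonempty)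
    (hR : (GridSet t u O (H :: R)).Nonempty) :
    GridSet t u O R = GridSet t u (O ∪ H) R ∪ GridSet t u O (H :: R) ∧
    Disjoint (GridSet t u (O ∪ H) R) (GridSet t u O (H :: R)) ∧
    (∀ m : ℕ, sizeCount (GridSet t u (O ∪ H) R) m ≤ sizeCount (GridSet t u O R) m) ∧
    (∃ m : ℕ, sizeCount (GridSet t u (O ∪ H) R) m < sizeCount (GridSet t u O R) m) ∧
    (∀ m : ℕ, sizeCount (GridSet t u O (H :: R)) m ≤ sizeCount (GridSet t u O R) m) ∧
    (∃ m : ℕ, sizeCount (GridSet t u O (H :: R)) m < sizeCount (GridSet t u O R) m) := by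
  have hsplit : GridSet t u O R = _ := GridSet_eq_union_insert H
  have hdisj : Disjoint (GridSet t u (O ∪ H) R) _ := disjoint_GridSet_insert H
  obtain ⟨hOle, hOlt⟩ := sizeCount_lt_of_disjoint_union GridSet_subset_Ggrid hsplit hdisj hR
  obtain ⟨hRle, hRlt⟩ := sizeCount_lt_of_disjoint_union GridSet_subset_Ggrid
    (hsplit.trans (Set.union_comm _ _)) hdisj.symm hO
  exact ⟨hsplit, hdisj, hOle, hOlt, hRle, hRlt⟩
end

section
/- Fix a cell c ∈ ℕ × ℕ and gridded permutations g and h with h ≤ g. Then every multiplex of g around c contains some multiplex of h around c: for all g' ∈ M_c(g) there exists h' ∈ M_c(h) with h' ≤ g'. -/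
/-- The map `b_p : ℕ → ℕ` contracting the three values `p, p+1, p+2` to `p`. -/
def bmap (p i : ℕ) : ℕ := if i < p then i else if i ≤ p + 2 then p else i - 2

/-- The contraction map `β_c` on cells around the cell `c`. -/
def betaCell (c d : ℕ × ℕ) : ℕ × ℕ := (bmap c.1 d.1, bmap c.2 d.2)

/-- The set `M_c(g)` of multiplexes of `g` around the cell `c`: the gridded
permutations with the same underlying permutation as `g` whose cells contract to
those of `g` under `β_c`. -/
def Mc (c : ℕ × ℕ) (g : GP) : Set GP :=
  {g' | g'.Consistent ∧ ∃ e : g'.n = g.n,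
    (∀ i : Fin g'.n, (g'.perm i : ℕ) = (g.perm (Fin.cast e i) : ℕ)) ∧
    ∀ i : Fin g'.n, betaCell c (g'.cells i) = g.cells (Fin.cast e i)}

/-! Restricting a multiplex `g'` of `g` to the positions of an occurrence of `h` in `g` gives a
multiplex of `h`: it has the underlying permutation of `h`, its cells contract to those of `h`
because the occurrence preserves cells, and it is consistent because every pattern of a
consistent gridded permutation is consistent. -/

namespace GP

def withCells (g : GP) (cells : Fin g.n → ℕ × ℕ) : GP := ⟨g.n, g.perm, cells⟩

theorem Consistent.of_contains {g h : GP} (hg : g.Consistent) (hgh : g.Contains h) :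
    h.Consistent := by
  obtain ⟨f, hf, hord, hcell⟩ := hgh
  refine ⟨fun i j hij => ?_, fun i j hij => ?_⟩
  · simpa only [hcell] using hg.1 (f i) (f j) (hf hij)
  · simpa only [hcell] using hg.2 (f i) (f j) ((hord i j).1 hij)

theorem mem_Mc_iff {c : ℕ × ℕ} {g g' : GP} :
    g' ∈ Mc c g ↔ ∃ cells : Fin g.n → ℕ × ℕ, g' = g.withCells cells ∧
      (g.withCells cells).Consistent ∧ ∀ i, betaCell c (cells i) = g.cells i := by
  constructor
  · obtain ⟨n, perm, cells⟩ := g'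
    rintro ⟨hcons, e, hperm, hβ⟩
    change n = g.n at e
    subst e
    obtain rfl : perm = g.perm := Equiv.ext fun i => Fin.ext (hperm i)
    exact ⟨cells, rfl, hcons, hβ⟩
  · rintro ⟨cells, rfl, hcons, hβ⟩
    exact ⟨hcons, rfl, fun _ => rfl, hβ⟩

end GP

theorem multiplex_of_contains_general (c : ℕ × ℕ) (g h : GP)
    (hgh : g.Contains h) :
    ∀ g' ∈ Mc c g, ∃ h' ∈ Mc c h, g'.Contains h' := by
  intro g' hg'
  obtain ⟨cells, rfl, hcons, hβ⟩ := GP.mem_Mc_iff.1 hg'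
  obtain ⟨f, hf, hord, hcell⟩ := hgh
  have hcont : (g.withCells cells).Contains (h.withCells (cells ∘ f)) :=
    ⟨f, hf, hord, fun _ => rfl⟩
  refine ⟨h.withCells (cells ∘ f), GP.mem_Mc_iff.2 ⟨_, rfl, hcons.of_contains hcont, ?_⟩, hcont⟩
  intro i
  rw [Function.comp_apply, hβ, hcell]

/-- If `h ≤ g`, then every multiplex of `g` around `c` contains some multiplex of `h`
around `c`. -/
theorem multiplex_of_contains (c : ℕ × ℕ) (g h : GP)
    (hg : g.Consistent) (hh : h.Consistent) (hgh : g.Contains h) :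
    ∀ g' ∈ Mc c g, ∃ h' ∈ Mc c h, g'.Contains h' :=
  multiplex_of_contains_general c g h hgh
end

section
/- Fix a cell c ∈ ℕ × ℕ and gridded permutations g and h. If some multiplex of g around c contains some multiplex of h around c — that is, if there exist g' ∈ M_c(g) and h' ∈ M_c(h) with h' ≤ g' — then h ≤ g. -/
/-- `Mc c g` consists of the consistent `g'` with `g'.Regrids (betaCell c) g`. -/
def GP.Regrids (φ : ℕ × ℕ → ℕ × ℕ) (g' g : GP) : Prop :=
  ∃ e : g'.n = g.n, (∀ i : Fin g'.n, (g'.perm i : ℕ) = g.perm (Fin.cast e i)) ∧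
    ∀ i : Fin g'.n, φ (g'.cells i) = g.cells (Fin.cast e i)

namespace GP

variable {φ : ℕ × ℕ → ℕ × ℕ} {g g' h h' : GP}

theorem regrids_betaCell_of_mem_Mc {c : ℕ × ℕ} (hg : g' ∈ Mc c g) : g'.Regrids (betaCell c) g :=
  hg.2

theorem perm_lt_perm_iff_of_val_eq {e : g'.n = g.n}
    (hp : ∀ i : Fin g'.n, (g'.perm i : ℕ) = g.perm (Fin.cast e i)) (a b : Fin g'.n) :
    g'.perm a < g'.perm b ↔ g.perm (Fin.cast e a) < g.perm (Fin.cast e b) := by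
  rw [Fin.lt_def, Fin.lt_def, hp, hp]

/-- The embedding of `h'` into `g'` also embeds `h` into `g`: only the cells change, and `φ`
maps equal cells to equal cells. -/
theorem Contains.of_regrids (hg : g'.Regrids φ g) (hh : h'.Regrids φ h)
    (hc : g'.Contains h') : g.Contains h := by
  obtain ⟨eg, hgp, hgc⟩ := hg
  obtain ⟨eh, hhp, hhc⟩ := hh
  obtain ⟨f, hf, hfp, hfc⟩ := hc
  refine ⟨fun i => Fin.cast eg (f (Fin.cast eh.symm i)), fun i j hij => ?_, fun i j => ?_,
    fun i => ?_⟩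
  · exact hf (by simpa using hij)
  · simpa [perm_lt_perm_iff_of_val_eq hhp, perm_lt_perm_iff_of_val_eq hgp] using
      hfp (Fin.cast eh.symm i) (Fin.cast eh.symm j)
  · simpa [hfc, hhc] using (hgc (f (Fin.cast eh.symm i))).symm

end GP

theorem contains_of_multiplex_general (c : ℕ × ℕ) (g h : GP)
    (hmul : ∃ g' ∈ Mc c g, ∃ h' ∈ Mc c h, g'.Contains h') :
    g.Contains h := by
  obtain ⟨g', hg', h', hh', hc⟩ := hmul
  exact hc.of_regrids (GP.regrids_betaCell_of_mem_Mc hg') (GP.regrids_betaCell_of_mem_Mc hh')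

/-- If some multiplex of `g` around `c` contains some multiplex of `h` around `c`,
then `h ≤ g`. -/
theorem contains_of_multiplex (c : ℕ × ℕ) (g h : GP)
    (hg : g.Consistent) (hh : h.Consistent)
    (hmul : ∃ g' ∈ Mc c g, ∃ h' ∈ Mc c h, g'.Contains h') :
    g.Contains h :=
  contains_of_multiplex_general c g h hmul
end

section
/- With 𝒯 and 𝒯' as in the context, let g ∈ Grid(𝒯) and suppose g has exactly ℓ entries whose cell is c. Then the number of multiplexes of g around c that lie in Grid(𝒯') is exactly ℓ, i.e., |M_c(g) ∩ Grid(𝒯')| = ℓ. -/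
/-- The size-1 gridded permutation in cell `d`. -/
def gp1 (d : ℕ × ℕ) : GP := ⟨1, Equiv.refl _, fun _ => d⟩

/-- The size-2 gridded permutation with underlying pattern `12` and cells `d1, d2`. -/
def gp12 (d1 d2 : ℕ × ℕ) : GP := ⟨2, Equiv.refl _, ![d1, d2]⟩

/-- The size-2 gridded permutation with underlying pattern `21` and cells `d1, d2`. -/
def gp21 (d1 d2 : ℕ × ℕ) : GP := ⟨2, Equiv.swap 0 1, ![d1, d2]⟩

/-- `M_c` applied elementwise to a set of gridded permutations. -/
def McSet (c : ℕ × ℕ) (X : Set GP) : Set GP := ⋃ x ∈ X, Mc c x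

/-!
In a multiplex `g'` of `g` lying in `Grid(𝒯')`, the requirement `C` and the obstructions `A`,
`B₁`, `B₂` force a single entry `q` to be the only entry of the middle column `c.1 + 1` and the
only entry of the middle row `c.2 + 1`, sitting in the central cell. Then `q` lies in cell `c` of
`g`, and consistency decides for every other entry of cell `c` whether it goes to the lower or the
upper copy of each tripled line, so `g'` is determined by `q`. Conversely, placing any entry of
cell `c` in the central cell gives a multiplex in `Grid(𝒯')`: containment of multiplexes projects
along `β_c` to containment in `g`, so `M_c(𝒪)` is avoided and `M_c(ℛᵢ)` is met. Hence the entries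
of `g` in cell `c` are in bijection with `M_c(g) ∩ Grid(𝒯')`.
-/

/-- The obstructions `M_c(𝒪) ∪ A ∪ B₁ ∪ B₂` of the tiling `𝒯'`. -/
def pointPlacementObstructions (t u : ℕ) (c : ℕ × ℕ) (O : Set GP) : Set GP :=
  McSet c O ∪
    {gp12 (c.1 + 1, c.2 + 1) (c.1 + 1, c.2 + 1),
     gp21 (c.1 + 1, c.2 + 1) (c.1 + 1, c.2 + 1)} ∪
    {x | ∃ j : ℕ, j < u + 2 ∧ j ≠ c.2 + 1 ∧ x = gp1 (c.1 + 1, j)} ∪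
    {x | ∃ i : ℕ, i < t + 2 ∧ i ≠ c.1 + 1 ∧ x = gp1 (i, c.2 + 1)}

/-- The requirements `M_c(ℛ₂), …, M_c(ℛ_k), C` of the tiling `𝒯'`. -/
def pointPlacementRequirements (c : ℕ × ℕ) (Rs : List (Set GP)) : List (Set GP) :=
  Rs.map (McSet c) ++ [{gp1 (c.1 + 1, c.2 + 1)}]

/-- The coordinate `a` of an entry of rank `i` once the entry of rank `p` is placed in the middle
copy `cx + 1` of the tripled line `cx`. -/
def placeCoord (cx a i p : ℕ) : ℕ :=
  if a < cx then a else if cx < a then a + 2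
  else if i < p then cx else if i = p then cx + 1 else cx + 2

lemma bmap_placeCoord (cx a i p : ℕ) : bmap cx (placeCoord cx a i p) = a := by
  unfold bmap placeCoord; split_ifs <;> omega

lemma bmap_add_one (p : ℕ) : bmap p (p + 1) = p := by
  unfold bmap; split_ifs <;> omega

lemma placeCoord_le_placeCoord {a b i j : ℕ} (cx p : ℕ) (hab : a ≤ b) (hij : i ≤ j) :
    placeCoord cx a i p ≤ placeCoord cx b j p := by
  unfold placeCoord; split_ifs <;> omega

lemma placeCoord_eq_add_one_iff {cx a i p : ℕ} :
    placeCoord cx a i p = cx + 1 ↔ a = cx ∧ i = p := by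
  unfold placeCoord; split_ifs <;> omega

lemma placeCoord_lt_add_two {cx a i p t : ℕ} (h : a < t) : placeCoord cx a i p < t + 2 := by
  unfold placeCoord; split_ifs <;> omega

lemma eq_placeCoord_of_bmap_eq {cx a v i p : ℕ} (hb : bmap cx v = a) (hv : v ≠ cx + 1)
    (hip : i ≠ p) (hlt : i < p → v ≤ cx + 1) (hgt : p < i → cx + 1 ≤ v) :
    v = placeCoord cx a i p := by
  unfold bmap at hb; unfold placeCoord; split_ifs at hb ⊢ <;> omega

lemma gp12_perm_lt_iff (d₁ d₂ : ℕ × ℕ) (a b : Fin 2) :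
    (gp12 d₁ d₂).perm a < (gp12 d₁ d₂).perm b ↔ a < b :=
  Iff.rfl

lemma gp21_perm_lt_iff (d₁ d₂ : ℕ × ℕ) (a b : Fin 2) :
    (gp21 d₁ d₂).perm a < (gp21 d₁ d₂).perm b ↔ b < a := by
  change Equiv.swap (0 : Fin 2) 1 a < Equiv.swap (0 : Fin 2) 1 b ↔ b < a
  fin_cases a <;> fin_cases b <;> decide

namespace GP

lemma contains_gp1_iff (g : GP) (d : ℕ × ℕ) : g.Contains (gp1 d) ↔ ∃ i, g.cells i = d := by
  constructor
  · rintro ⟨f, -, -, hf⟩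
    exact ⟨f ⟨0, Nat.one_pos⟩, hf _⟩
  · rintro ⟨i, hi⟩
    refine ⟨fun _ => i, Subsingleton.strictMono (α := Fin 1) _, fun a b => ?_, fun _ => hi⟩
    rw [Subsingleton.elim (α := Fin 1) a b]
    simp

lemma contains_gp12_or_gp21_iff (g : GP) (d : ℕ × ℕ) :
    g.Contains (gp12 d d) ∨ g.Contains (gp21 d d) ↔
      ∃ i j, i < j ∧ g.cells i = d ∧ g.cells j = d := by
  constructor
  · rintro (⟨f, hf, -, hc⟩ | ⟨f, hf, -, hc⟩) <;>
      exact ⟨f ⟨0, two_pos⟩, f ⟨1, one_lt_two⟩, hf Fin.zero_lt_one, hc _, hc _⟩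
  · rintro ⟨i, j, hij, hi, hj⟩
    have hmono : StrictMono ![i, j] := Fin.strictMono_iff_lt_succ.mpr (by simpa using hij)
    have hcells : ∀ k : Fin 2, g.cells (![i, j] k) = ![d, d] k := by
      intro k; fin_cases k <;> simp [hi, hj]
    rcases (g.perm.injective.ne hij.ne).lt_or_gt with hp | hp
    · have hperm : StrictMono (g.perm ∘ ![i, j]) :=
        Fin.strictMono_iff_lt_succ.mpr (by simpa using hp)
      exact .inl ⟨![i, j], hmono,
        fun a b => (gp12_perm_lt_iff d d a b).trans hperm.lt_iff_lt.symm, hcells⟩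
    · have hperm : StrictAnti (g.perm ∘ ![i, j]) :=
        Fin.strictAnti_iff_succ_lt.mpr (by simpa using hp)
      exact .inr ⟨![i, j], hmono,
        fun a b => (gp21_perm_lt_iff d d a b).trans hperm.lt_iff_gt.symm, hcells⟩

def IsCrossPoint (g : GP) (d : ℕ × ℕ) (q : Fin g.n) : Prop :=
  ∀ i, ((g.cells i).1 = d.1 ↔ i = q) ∧ ((g.cells i).2 = d.2 ↔ i = q)

lemma IsCrossPoint.cells_eq {g : GP} {d : ℕ × ℕ} {q : Fin g.n} (hq : g.IsCrossPoint d q) :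
    g.cells q = d :=
  Prod.ext ((hq q).1.2 rfl) ((hq q).2.2 rfl)

lemma exists_isCrossPoint_iff {g : GP} {t u : ℕ}
    (hg : ∀ i, (g.cells i).1 < t ∧ (g.cells i).2 < u) (d : ℕ × ℕ) :
    (∃ q, g.IsCrossPoint d q) ↔
      g.Contains (gp1 d) ∧ ¬ (g.Contains (gp12 d d) ∨ g.Contains (gp21 d d)) ∧
        (∀ j < u, j ≠ d.2 → ¬ g.Contains (gp1 (d.1, j))) ∧
        (∀ i < t, i ≠ d.1 → ¬ g.Contains (gp1 (i, d.2))) := by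
  simp only [contains_gp1_iff, contains_gp12_or_gp21_iff]
  constructor
  · rintro ⟨q, hq⟩
    refine ⟨⟨q, hq.cells_eq⟩, ?_, ?_, ?_⟩
    · rintro ⟨i, j, hij, hi, hj⟩
      exact hij.ne <|
        ((hq i).1.1 (congrArg Prod.fst hi)).trans ((hq j).1.1 (congrArg Prod.fst hj)).symm
    · rintro j - hj ⟨i, hi⟩
      rw [(hq i).1.1 (by rw [hi]), hq.cells_eq] at hi
      exact hj (congrArg Prod.snd hi).symm
    · rintro j - hj ⟨i, hi⟩
      rw [(hq i).2.1 (by rw [hi]), hq.cells_eq] at hi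
      exact hj (congrArg Prod.fst hi).symm
  · rintro ⟨⟨q, hq⟩, hpair, hcol, hrow⟩
    have hcenter : ∀ i, g.cells i = d → i = q := by
      intro i hi
      by_contra hne
      rcases Ne.lt_or_gt hne with h | h
      exacts [hpair ⟨i, q, h, hi, hq⟩, hpair ⟨q, i, h, hq, hi⟩]
    refine ⟨q, fun i => ⟨⟨fun hx => hcenter i ?_, ?_⟩, ⟨fun hy => hcenter i ?_, ?_⟩⟩⟩
    · by_contra hne
      exact hcol _ (hg i).2 (fun hy => hne (Prod.ext hx hy)) ⟨i, Prod.ext hx rfl⟩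
    · rintro rfl; rw [hq]
    · by_contra hne
      exact hrow _ (hg i).1 (fun hx => hne (Prod.ext hx hy)) ⟨i, Prod.ext rfl hy⟩
    · rintro rfl; rw [hq]

lemma exists_eq_mk_of_mem_Mc {c : ℕ × ℕ} {g g' : GP} (h : g' ∈ Mc c g) :
    ∃ cells : Fin g.n → ℕ × ℕ, g' = ⟨g.n, g.perm, cells⟩ ∧ g'.Consistent ∧
      ∀ i, betaCell c (cells i) = g.cells i := by
  obtain ⟨n, perm, cells⟩ := g'
  obtain ⟨hcons, e, hperm, hcells⟩ := h
  dsimp only at e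
  subst e
  obtain rfl : perm = g.perm := Equiv.ext fun i => Fin.ext (hperm i)
  exact ⟨cells, rfl, hcons, hcells⟩

lemma mk_mem_Mc {c : ℕ × ℕ} {g : GP} {cells : Fin g.n → ℕ × ℕ}
    (hcons : (⟨g.n, g.perm, cells⟩ : GP).Consistent)
    (hcells : ∀ i, betaCell c (cells i) = g.cells i) :
    ⟨g.n, g.perm, cells⟩ ∈ Mc c g :=
  ⟨hcons, rfl, fun _ => rfl, hcells⟩

lemma Contains.of_mem_Mc {c : ℕ × ℕ} {g g' o o' : GP} (hg' : g' ∈ Mc c g)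
    (ho' : o' ∈ Mc c o) (h : g'.Contains o') : g.Contains o := by
  obtain ⟨cells, rfl, -, hcells⟩ := exists_eq_mk_of_mem_Mc hg'
  obtain ⟨ocells, rfl, -, hocells⟩ := exists_eq_mk_of_mem_Mc ho'
  obtain ⟨f, hf, hpat, hfcells⟩ := h
  refine ⟨f, hf, hpat, fun i => ?_⟩
  rw [← hcells, ← hocells]
  exact congrArg (betaCell c) (hfcells i)

lemma Contains.exists_mem_Mc {c : ℕ × ℕ} {g g' x : GP} (hg' : g' ∈ Mc c g)
    (h : g.Contains x) : ∃ x' ∈ Mc c x, g'.Contains x' := by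
  obtain ⟨cells, rfl, hcons, hcells⟩ := exists_eq_mk_of_mem_Mc hg'
  obtain ⟨f, hf, hpat, hfcells⟩ := h
  refine ⟨⟨x.n, x.perm, cells ∘ f⟩, mk_mem_Mc ⟨?_, ?_⟩ ?_, f, hf, hpat, fun _ => rfl⟩
  · exact fun i j hij => hcons.1 _ _ (hf hij)
  · exact fun i j hij => hcons.2 _ _ ((hpat i j).1 hij)
  · intro i
    rw [Function.comp_apply, hcells, hfcells]

/-- The multiplex of `g` around `c` in which the entry `p` occupies the central cell
`(c.1 + 1, c.2 + 1)`. -/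
def multiplexAt (g : GP) (c : ℕ × ℕ) (p : Fin g.n) : GP :=
  ⟨g.n, g.perm, fun i =>
    (placeCoord c.1 (g.cells i).1 i p, placeCoord c.2 (g.cells i).2 (g.perm i) (g.perm p))⟩

lemma multiplexAt_mem_Mc {g : GP} (hg : g.Consistent) (c : ℕ × ℕ) (p : Fin g.n) :
    g.multiplexAt c p ∈ Mc c g :=
  mk_mem_Mc
    ⟨fun i j hij => placeCoord_le_placeCoord _ _ (hg.1 i j hij) hij.le,
      fun i j hij => placeCoord_le_placeCoord _ _ (hg.2 i j hij) hij.le⟩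
    fun _ => Prod.ext (bmap_placeCoord _ _ _ _) (bmap_placeCoord _ _ _ _)

lemma multiplexAt_isCrossPoint {g : GP} {c : ℕ × ℕ} {p : Fin g.n} (hp : g.cells p = c) :
    (g.multiplexAt c p).IsCrossPoint (c.1 + 1, c.2 + 1) p := by
  intro (i : Fin g.n)
  simp only [multiplexAt, placeCoord_eq_add_one_iff, Fin.val_inj, g.perm.injective.eq_iff,
    and_iff_right_iff_imp]
  constructor <;> rintro rfl <;> rw [hp]

lemma IsCrossPoint.eq_multiplexAt {c : ℕ × ℕ} {g g' : GP} (hg' : g' ∈ Mc c g) {q : Fin g'.n}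
    (hq : g'.IsCrossPoint (c.1 + 1, c.2 + 1) q) :
    ∃ p, g.cells p = c ∧ g.multiplexAt c p = g' := by
  obtain ⟨cells, rfl, hcons, hcells⟩ := exists_eq_mk_of_mem_Mc hg'
  have hq_cells : cells q = (c.1 + 1, c.2 + 1) := hq.cells_eq
  have hp : g.cells q = c := by
    rw [← hcells, hq_cells]
    exact Prod.ext (bmap_add_one _) (bmap_add_one _)
  refine ⟨q, hp, ?_⟩
  simp only [multiplexAt, GP.mk.injEq, heq_eq_eq, true_and]
  funext i
  obtain rfl | hiq := eq_or_ne i q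
  · rw [hq_cells, hp]
    exact Prod.ext (placeCoord_eq_add_one_iff.mpr ⟨rfl, rfl⟩)
      (placeCoord_eq_add_one_iff.mpr ⟨rfl, rfl⟩)
  · have hperm : (g.perm i : ℕ) ≠ g.perm q := Fin.val_ne_of_ne (g.perm.injective.ne hiq)
    refine Prod.ext (eq_placeCoord_of_bmap_eq (congrArg Prod.fst (hcells i)) ?_
      (Fin.val_ne_of_ne hiq) ?_ ?_).symm (eq_placeCoord_of_bmap_eq
      (congrArg Prod.snd (hcells i)) ?_ hperm ?_ ?_).symm
    · exact fun h => hiq (((hq i).1).1 h)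
    · exact fun h => (hcons.1 i q h).trans_eq (congrArg Prod.fst hq_cells)
    · exact fun h => (congrArg Prod.fst hq_cells).symm.trans_le (hcons.1 q i h)
    · exact fun h => hiq (((hq i).2).1 h)
    · exact fun h => (hcons.2 i q h).trans_eq (congrArg Prod.snd hq_cells)
    · exact fun h => (congrArg Prod.snd hq_cells).symm.trans_le (hcons.2 q i h)

variable {t u : ℕ} {c : ℕ × ℕ} {O R₁ : Set GP} {Rs : List (Set GP)} {g : GP}

lemma multiplexAt_mem_gridSet_pointPlacement (hg : g ∈ GridSet t u O (R₁ :: Rs)) {p : Fin g.n}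
    (hp : g.cells p = c) :
    g.multiplexAt c p ∈ GridSet (t + 2) (u + 2) (pointPlacementObstructions t u c O)
      (pointPlacementRequirements c Rs) := by
  obtain ⟨⟨hcons, hbound⟩, havoid, hreq⟩ := hg
  have hMc := multiplexAt_mem_Mc hcons c p
  have hbound' : ∀ i, ((g.multiplexAt c p).cells i).1 < t + 2 ∧
      ((g.multiplexAt c p).cells i).2 < u + 2 :=
    fun i => ⟨placeCoord_lt_add_two (hbound i).1, placeCoord_lt_add_two (hbound i).2⟩
  obtain ⟨-, hpair, hcol, hrow⟩ :=
    (exists_isCrossPoint_iff hbound' _).1 ⟨p, multiplexAt_isCrossPoint hp⟩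
  refine ⟨⟨hMc.1, hbound'⟩, ?_, fun Ri hRi => ?_⟩
  · rintro o (((ho | ho) | ⟨j, hj, hjc, rfl⟩) | ⟨i, hi, hic, rfl⟩) hcont
    · obtain ⟨o₀, ho₀, ho⟩ := Set.mem_iUnion₂.1 ho
      exact havoid o₀ ho₀ (hcont.of_mem_Mc hMc ho)
    · rcases ho with rfl | rfl
      exacts [hpair (.inl hcont), hpair (.inr hcont)]
    · exact hcol j hj hjc hcont
    · exact hrow i hi hic hcont
  · rcases List.mem_append.1 hRi with hRi | hRi
    · obtain ⟨R, hR, rfl⟩ := List.mem_map.1 hRi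
      obtain ⟨x, hx, hcont⟩ := hreq R (List.mem_cons_of_mem _ hR)
      obtain ⟨x', hx', hcont'⟩ := hcont.exists_mem_Mc hMc
      exact ⟨x', Set.mem_biUnion hx hx', hcont'⟩
    · rw [List.mem_singleton.1 hRi]
      exact ⟨_, rfl, (contains_gp1_iff _ _).2 ⟨p, (multiplexAt_isCrossPoint hp).cells_eq⟩⟩

lemma exists_isCrossPoint_of_mem_gridSet_pointPlacement {g' : GP}
    (hg' : g' ∈ GridSet (t + 2) (u + 2) (pointPlacementObstructions t u c O)
      (pointPlacementRequirements c Rs)) :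
    ∃ q, g'.IsCrossPoint (c.1 + 1, c.2 + 1) q := by
  obtain ⟨⟨-, hbound⟩, havoid, hreq⟩ := hg'
  obtain ⟨x, hx, hcont⟩ := hreq _ (List.mem_append_right _ (List.mem_singleton_self _))
  rw [Set.mem_singleton_iff.1 hx] at hcont
  refine (exists_isCrossPoint_iff hbound _).2 ⟨hcont, ?_, ?_, ?_⟩
  · rintro (h | h)
    exacts [havoid _ (.inl (.inl (.inr (.inl rfl)))) h,
      havoid _ (.inl (.inl (.inr (.inr rfl)))) h]
  · exact fun j hj hjc => havoid _ (.inl (.inr ⟨j, hj, hjc, rfl⟩))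
  · exact fun i hi hic => havoid _ (.inr ⟨i, hi, hic, rfl⟩)

lemma mem_Mc_and_mem_gridSet_pointPlacement_iff (hg : g ∈ GridSet t u O (R₁ :: Rs))
    {g' : GP} :
    g' ∈ Mc c g ∧ g' ∈ GridSet (t + 2) (u + 2) (pointPlacementObstructions t u c O)
      (pointPlacementRequirements c Rs) ↔ ∃ p, g.cells p = c ∧ g.multiplexAt c p = g' := by
  constructor
  · rintro ⟨hMc, hgrid⟩
    obtain ⟨q, hq⟩ := exists_isCrossPoint_of_mem_gridSet_pointPlacement hgrid
    exact hq.eq_multiplexAt hMc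
  · rintro ⟨p, hp, rfl⟩
    exact ⟨multiplexAt_mem_Mc hg.1.1 c p, multiplexAt_mem_gridSet_pointPlacement hg hp⟩

lemma multiplexAt_injOn : Set.InjOn (g.multiplexAt c) {p | g.cells p = c} := by
  intro p hp p' hp' h
  have hcells : (g.multiplexAt c p).cells = (g.multiplexAt c p').cells :=
    eq_of_heq (GP.mk.inj h).2.2
  have hx := ((multiplexAt_isCrossPoint hp) p').1
  rw [hcells] at hx
  exact (hx.1 (((multiplexAt_isCrossPoint hp') p').1.2 rfl)).symm

end GP

theorem point_multiplex_count_general (t u : ℕ) (c : ℕ × ℕ)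
    (O : Set GP) (R1 : Set GP) (Rs : List (Set GP))
    (g : GP) (hg : g ∈ GridSet t u O (R1 :: Rs)) :
    Nat.card {g' : GP // g' ∈ Mc c g ∧
        g' ∈ GridSet (t + 2) (u + 2)
          (McSet c O ∪
            {gp12 (c.1 + 1, c.2 + 1) (c.1 + 1, c.2 + 1),
             gp21 (c.1 + 1, c.2 + 1) (c.1 + 1, c.2 + 1)} ∪
            {x | ∃ j : ℕ, j < u + 2 ∧ j ≠ c.2 + 1 ∧ x = gp1 (c.1 + 1, j)} ∪
            {x | ∃ i : ℕ, i < t + 2 ∧ i ≠ c.1 + 1 ∧ x = gp1 (i, c.2 + 1)})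
          (Rs.map (McSet c) ++ [{gp1 (c.1 + 1, c.2 + 1)}])} =
      (Finset.univ.filter fun i : Fin g.n => g.cells i = c).card := by
  calc _ = Nat.card (g.multiplexAt c '' {p | g.cells p = c}) :=
        Nat.card_congr (Equiv.subtypeEquivRight fun _ =>
          GP.mem_Mc_and_mem_gridSet_pointPlacement_iff hg)
    _ = Nat.card {p | g.cells p = c} := Nat.card_image_of_injOn GP.multiplexAt_injOn
    _ = _ := Nat.card_eq_fintype_card.trans (Fintype.card_subtype _)

/-- Lemma `point-multiplex-in-T-prime`: if `g ∈ Grid(𝒯)` has exactly `ℓ` entries in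
the cell `c`, then exactly `ℓ` of the multiplexes of `g` around `c` lie in
`Grid(𝒯')`, where `𝒯'` is the intermediate tiling of the point placement strategy. -/
theorem point_multiplex_count (t u : ℕ) (c : ℕ × ℕ) (hct : c.1 < t) (hcu : c.2 < u)
    (O : Set GP) (R1 : Set GP) (Rs : List (Set GP))
    (hO : O ⊆ Ggrid t u) (hR1 : R1 ⊆ Ggrid t u) (hRs : ∀ Ri ∈ Rs, Ri ⊆ Ggrid t u)
    (g : GP) (hg : g ∈ GridSet t u O (R1 :: Rs)) :
    Nat.card {g' : GP // g' ∈ Mc c g ∧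
        g' ∈ GridSet (t + 2) (u + 2)
          (McSet c O ∪
            {gp12 (c.1 + 1, c.2 + 1) (c.1 + 1, c.2 + 1),
             gp21 (c.1 + 1, c.2 + 1) (c.1 + 1, c.2 + 1)} ∪
            {x | ∃ j : ℕ, j < u + 2 ∧ j ≠ c.2 + 1 ∧ x = gp1 (c.1 + 1, j)} ∪
            {x | ∃ i : ℕ, i < t + 2 ∧ i ≠ c.1 + 1 ∧ x = gp1 (i, c.2 + 1)})
          (Rs.map (McSet c) ++ [{gp1 (c.1 + 1, c.2 + 1)}])} =
      (Finset.univ.filter fun i : Fin g.n => g.cells i = c).card :=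
  point_multiplex_count_general t u c O R1 Rs g hg
end

section
/- Fix a row index r ∈ ℕ and a set S ⊆ ℕ of column indices. If a gridded permutation g = (π, (c_1, …, c_n)) avoids all critical row patterns with respect to r and S, then Γ(g) := (π, (γ(c_1), …, γ(c_n))) satisfies the consistency condition, i.e., it is a valid gridded permutation. -/
open Classical in
/-- The cell map `γ` of row separation at row `r` with columns `S`. -/
noncomputable def gammaCell (r : ℕ) (S : Set ℕ) (d : ℕ × ℕ) : ℕ × ℕ :=
  if d.2 < r ∨ (d.2 = r ∧ d.1 ∈ S) then d else (d.1, d.2 + 1)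

/-- The map `Γ` of row separation, applying `γ` to every cell. -/
noncomputable def rowSepMap (r : ℕ) (S : Set ℕ) (g : GP) : GP :=
  ⟨g.n, g.perm, fun i => gammaCell r S (g.cells i)⟩

/-- The critical row patterns with respect to row `r` and column set `S`. -/
def Crit (r : ℕ) (S : Set ℕ) : Set GP :=
  {x | (∃ i i' : ℕ, i ∈ S ∧ i' ∉ S ∧ i < i' ∧ x = gp21 (i, r) (i', r)) ∨
       (∃ i i' : ℕ, i' ∉ S ∧ i ∈ S ∧ i' < i ∧ x = gp12 (i', r) (i, r))}

/-- `g` avoids all critical row patterns with respect to `r` and `S`. -/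
def AvoidsCrit (r : ℕ) (S : Set ℕ) (g : GP) : Prop :=
  ∀ x ∈ Crit r S, ¬ g.Contains x

namespace GP

lemma contains_gp12 {g : GP} {i j : Fin g.n} (hij : i < j) (hp : g.perm i < g.perm j) :
    g.Contains (gp12 (g.cells i) (g.cells j)) := by
  refine ⟨![i, j], Fin.strictMono_iff_lt_succ.2 fun k => by fin_cases k; exact hij, ?_, ?_⟩
  · show ∀ a b : Fin 2, a < b ↔ g.perm (![i, j] a) < g.perm (![i, j] b)
    simp [Fin.forall_fin_two, hp, hp.le]
  · show ∀ a : Fin 2, _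
    simp [Fin.forall_fin_two, gp12]

lemma contains_gp21 {g : GP} {i j : Fin g.n} (hij : i < j) (hp : g.perm j < g.perm i) :
    g.Contains (gp21 (g.cells i) (g.cells j)) := by
  refine ⟨![i, j], Fin.strictMono_iff_lt_succ.2 fun k => by fin_cases k; exact hij, ?_, ?_⟩
  · show ∀ a b : Fin 2, Equiv.swap (0 : Fin 2) 1 a < Equiv.swap 0 1 b ↔
      g.perm (![i, j] a) < g.perm (![i, j] b)
    simp [Fin.forall_fin_two, hp, hp.le]
  · show ∀ a : Fin 2, _
    simp [Fin.forall_fin_two, gp21]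

end GP

lemma gammaCell_fst (r : ℕ) (S : Set ℕ) (d : ℕ × ℕ) : (gammaCell r S d).1 = d.1 := by
  unfold gammaCell
  split_ifs <;> rfl

lemma gammaCell_snd_le_gammaCell_snd {r : ℕ} {S : Set ℕ} {d e : ℕ × ℕ} (hde : d.2 ≤ e.2)
    (hcrit : ¬(d.2 = r ∧ e.2 = r ∧ d.1 ∉ S ∧ e.1 ∈ S)) :
    (gammaCell r S d).2 ≤ (gammaCell r S e).2 := by
  unfold gammaCell
  split_ifs <;> grind

lemma AvoidsCrit.false_of_row_pair {r : ℕ} {S : Set ℕ} {g : GP} (havoid : AvoidsCrit r S g)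
    (hg : g.Consistent) {i j : Fin g.n} (hp : g.perm i < g.perm j) {a b : ℕ}
    (hi : g.cells i = (a, r)) (hj : g.cells j = (b, r)) (ha : a ∉ S) (hb : b ∈ S) : False := by
  have hab : a ≠ b := by rintro rfl; exact ha hb
  rcases lt_or_gt_of_ne (show i ≠ j by rintro rfl; exact hp.false) with hij | hji
  · have hxle : a ≤ b := by simpa [hi, hj] using hg.1 i j hij
    refine havoid _ (Or.inr ⟨b, a, ha, hb, lt_of_le_of_ne hxle hab, rfl⟩) ?_
    simpa only [hi, hj] using GP.contains_gp12 hij hp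
  · have hxle : b ≤ a := by simpa [hi, hj] using hg.1 j i hji
    refine havoid _ (Or.inl ⟨b, a, hb, ha, lt_of_le_of_ne hxle hab.symm, rfl⟩) ?_
    simpa only [hi, hj] using GP.contains_gp21 hji hp

/-- If a gridded permutation `g` avoids all critical row patterns with respect to
`r` and `S`, then `Γ(g)` satisfies the consistency condition, i.e., it is a valid
gridded permutation. -/
theorem rowSep_consistent (r : ℕ) (S : Set ℕ) (g : GP) (hg : g.Consistent)
    (havoid : AvoidsCrit r S g) : (rowSepMap r S g).Consistent := by
  constructor
  · intro i j hij
    simpa only [rowSepMap, gammaCell_fst] using hg.1 i j hij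
  · intro i j hp
    refine gammaCell_snd_le_gammaCell_snd (hg.2 i j hp) fun ⟨hi, hj, ha, hb⟩ => ?_
    exact havoid.false_of_row_pair hg hp (Prod.ext rfl hi) (Prod.ext rfl hj) ha hb
end

section
/- Fix a row index r ∈ ℕ and a set S ⊆ ℕ of column indices, and let g and h be gridded permutations each avoiding all critical row patterns with respect to r and S. If Γ(h) ≤ Γ(g), then h ≤ g. -/
def GP.mapCells (φ : ℕ × ℕ → ℕ × ℕ) (g : GP) : GP :=
  ⟨g.n, g.perm, φ ∘ g.cells⟩

theorem GP.Contains.of_mapCells {φ : ℕ × ℕ → ℕ × ℕ} (hφ : Function.Injective φ) {g h : GP}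
    (hc : (g.mapCells φ).Contains (h.mapCells φ)) : g.Contains h := by
  obtain ⟨f, hmono, hperm, hcells⟩ := hc
  exact ⟨f, hmono, hperm, fun i => hφ (hcells i)⟩

-- Fixed cells lie in rows `≤ r` and shifted cells in rows `> r`, so the two branches of `γ` have
-- disjoint images.
theorem gammaCell_injective (r : ℕ) (S : Set ℕ) : Function.Injective (gammaCell r S) := by
  intro a b hab
  unfold gammaCell at hab
  split_ifs at hab <;> simp only [Prod.ext_iff] at hab ⊢ <;> grind

theorem contains_of_rowSep_contains_general (r : ℕ) (S : Set ℕ) (g h : GP)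
    (hΓ : (rowSepMap r S g).Contains (rowSepMap r S h)) :
    g.Contains h :=
  GP.Contains.of_mapCells (gammaCell_injective r S) hΓ

/-- If `g` and `h` avoid all critical row patterns and `Γ(h) ≤ Γ(g)`, then
`h ≤ g`. -/
theorem contains_of_rowSep_contains (r : ℕ) (S : Set ℕ) (g h : GP)
    (hg : g.Consistent) (hh : h.Consistent)
    (hag : AvoidsCrit r S g) (hah : AvoidsCrit r S h)
    (hΓ : (rowSepMap r S g).Contains (rowSepMap r S h)) :
    g.Contains h :=
  contains_of_rowSep_contains_general r S g h hΓ
end
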